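/- arXiv:2407.04075 — 2 statements merged into one kernel-verified Lean document; each statement's English description precedes it below -/
import Mathlib

section
/- Consider an L-layer multilayer perceptron with weight matrices W¹ ∈ ℝ^{d×w}, W², …, W^{L−1} ∈ ℝ^{w×w}, W^L ∈ ℝ^{w×C}, where L ≥ 4. Suppose each layer ℓ is independently randomly pruned so that a uniformly random set of exactly n_ℓ entries of W^ℓ remains nonzero. Assume w > max over ℓ ∈ {2,…,L−2} of (n_ℓ + n_{ℓ+1}). Then the probability that the pruned network contains no connected path from input to output tends to 1 as w → ∞ (with all n_ℓ fixed). -/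
open Filter

/-- Layer widths of an `L`-layer MLP: input dimension `d`, output dimension `C`,
and hidden width `w`. -/
def mlpDim (d C L w : ℕ) (i : ℕ) : ℕ :=
  if i = 0 then d else if i = L then C else w

/-- `M ℓ` (for `ℓ : Fin L`) is the set of retained positions of the weight matrix
`W^{ℓ+1}`, whose row indices live in layer `ℓ+1` and column indices in layer `ℓ`.
`mlpNoPath` states there is no connected input-to-output path, i.e. no sequence of
indices `i₀, …, i_L` with every corresponding weight entry retained. -/
def mlpNoPath (d C L w : ℕ) (M : Fin L → Finset (ℕ × ℕ)) : Prop :=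
  ¬ ∃ path : (i : Fin (L + 1)) → Fin (mlpDim d C L w i),
      ∀ ℓ : Fin L, (((path ℓ.succ : ℕ)), ((path ℓ.castSucc : ℕ))) ∈ M ℓ

instance (d C L w : ℕ) : DecidablePred (mlpNoPath d C L w) := fun M => by
  unfold mlpNoPath; infer_instance

/-!
A connected path must pass through some node `j` of the hidden layer between two consecutive
middle weight matrices, so row `j` of the first and column `j` of the second both contain a
retained entry. A uniformly random `k`-subset of the `w × w` grid meets a fixed row (or column)
with probability at most `w · k / w² = k / w`, and the two layers are pruned independently, so
a union bound over the `w` choices of `j` bounds the probability of a path by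
`w · (n₂ / w) · (n₃ / w) = n₂ n₃ / w → 0`.
-/

open Finset

section UniformProb

variable {α : Type*}

/-- The probability of `P` under the uniform distribution on `s` (junk value `0` if `s = ∅`). -/
noncomputable def uniformProb (s : Finset α) (P : α → Prop) [DecidablePred P] : ℝ :=
  #(s.filter P) / #s

lemma uniformProb_nonneg (s : Finset α) (P : α → Prop) [DecidablePred P] :
    0 ≤ uniformProb s P := by
  unfold uniformProb; positivity

lemma uniformProb_le_one (s : Finset α) (P : α → Prop) [DecidablePred P] :
    uniformProb s P ≤ 1 :=
  div_le_one_of_le₀ (by exact_mod_cast card_filter_le s P) (Nat.cast_nonneg _)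

lemma uniformProb_mono {s : Finset α} {P Q : α → Prop} [DecidablePred P] [DecidablePred Q]
    (h : ∀ a ∈ s, P a → Q a) : uniformProb s P ≤ uniformProb s Q := by
  unfold uniformProb
  gcongr with a ha
  exact h a ha

lemma uniformProb_congr {s : Finset α} {P Q : α → Prop} [DecidablePred P] [DecidablePred Q]
    (h : ∀ a ∈ s, P a ↔ Q a) : uniformProb s P = uniformProb s Q :=
  (uniformProb_mono fun a ha => (h a ha).1).antisymm (uniformProb_mono fun a ha => (h a ha).2)

lemma uniformProb_true {s : Finset α} (hs : s.Nonempty) : uniformProb s (fun _ => True) = 1 := by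
  unfold uniformProb
  rw [filter_true, div_self (by exact_mod_cast hs.card_pos.ne')]

lemma uniformProb_not {s : Finset α} (hs : s.Nonempty) (P : α → Prop) [DecidablePred P] :
    uniformProb s (fun a => ¬ P a) = 1 - uniformProb s P := by
  unfold uniformProb
  rw [eq_sub_iff_add_eq, ← add_div, div_eq_one_iff_eq (by exact_mod_cast hs.card_pos.ne')]
  exact_mod_cast (add_comm _ _).trans (card_filter_add_card_filter_not P)

lemma uniformProb_exists_le {ι : Type*} (s : Finset α) (t : Finset ι) (P : ι → α → Prop)
    [∀ i, DecidablePred (P i)] [DecidablePred fun a => ∃ i ∈ t, P i a] :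
    uniformProb s (fun a => ∃ i ∈ t, P i a) ≤ ∑ i ∈ t, uniformProb s (P i) := by
  classical
  unfold uniformProb
  rw [← sum_div]
  gcongr
  have hcover : s.filter (fun a => ∃ i ∈ t, P i a) = t.biUnion fun i => s.filter (P i) := by
    ext a; simp only [mem_filter, mem_biUnion]; tauto
  exact_mod_cast hcover ▸ card_biUnion_le

lemma tendsto_uniformProb_one {s : ℕ → Finset α} {P : ℕ → α → Prop} [∀ w, DecidablePred (P w)]
    (c : ℝ) (hs : ∀ᶠ w in atTop, (s w).Nonempty)
    (hbad : ∀ᶠ w in atTop, uniformProb (s w) (fun a => ¬ P w a) ≤ c / w) :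
    Tendsto (fun w => uniformProb (s w) (P w)) atTop (nhds 1) := by
  have hlower : Tendsto (fun w : ℕ => 1 - c / w) atTop (nhds 1) := by
    simpa using tendsto_const_nhds.sub (tendsto_const_div_atTop_nhds_zero_nat c)
  refine tendsto_of_tendsto_of_tendsto_of_le_of_le' hlower tendsto_const_nhds ?_
    (Eventually.of_forall fun w => uniformProb_le_one _ _)
  filter_upwards [hs, hbad] with w hsw hbw
  rw [uniformProb_not hsw] at hbw
  linarith

end UniformProb

section Product

variable {ι α : Type*} [Fintype ι] [DecidableEq ι]

lemma uniformProb_piFinset_forall (A : ι → Finset α) (P : ι → α → Prop)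
    [∀ i, DecidablePred (P i)] :
    uniformProb (Fintype.piFinset A) (fun M => ∀ i, P i (M i)) =
      ∏ i, uniformProb (A i) (P i) := by
  have hfilter : (Fintype.piFinset A).filter (fun M => ∀ i, P i (M i)) =
      Fintype.piFinset fun i => (A i).filter (P i) := by
    ext M; simp only [mem_filter, Fintype.mem_piFinset]; exact forall_and.symm
  unfold uniformProb
  rw [hfilter, Fintype.card_piFinset, Fintype.card_piFinset, Nat.cast_prod, Nat.cast_prod,
    prod_div_distrib]

lemma uniformProb_piFinset_and {A : ι → Finset α} (hA : ∀ i, (A i).Nonempty) {i j : ι}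
    (hij : i ≠ j) (P Q : α → Prop) [DecidablePred P] [DecidablePred Q] :
    uniformProb (Fintype.piFinset A) (fun M => P (M i) ∧ Q (M j)) =
      uniformProb (A i) P * uniformProb (A j) Q := by
  classical
  let R : ι → α → Prop := fun k => if k = i then P else if k = j then Q else fun _ => True
  have hR : ∀ M : ι → α, (P (M i) ∧ Q (M j)) ↔ ∀ k, R k (M k) := by
    refine fun M => ⟨fun ⟨hP, hQ⟩ k => ?_,
      fun h => ⟨by simpa [R] using h i, by simpa [R, hij.symm] using h j⟩⟩
    dsimp only [R]
    split_ifs with hki hkj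
    exacts [hki ▸ hP, hkj ▸ hQ, trivial]
  rw [uniformProb_congr fun M _ => hR M, uniformProb_piFinset_forall A R,
    prod_eq_mul i j hij (fun k _ hk => by simpa [R, hk.1, hk.2] using uniformProb_true (hA k))
      (by simp) (by simp)]
  congr 1 <;> exact uniformProb_congr fun a _ => by simp [R, hij.symm]

end Product

section RandomSubset

variable {α : Type*} [DecidableEq α]

lemma uniformProb_mem_powersetCard_le (G : Finset α) (k : ℕ) (q : α) :
    uniformProb (G.powersetCard k) (q ∈ ·) ≤ k / #G := by
  unfold uniformProb
  rcases k with _ | k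
  · simp
  by_cases hq : q ∈ G
  · obtain ⟨m, hm⟩ : ∃ m, #G = m + 1 := ⟨#G - 1, by have := card_pos.2 ⟨q, hq⟩; omega⟩
    have hcount : #((G.powersetCard (k + 1)).filter (q ∈ ·)) = m.choose k := by
      simpa [hm] using card_filter_powersetCard_subset {q} G (k + 1) (by simpa) (by simp)
    rw [hcount, card_powersetCard, hm]
    rcases (m + 1).choose (k + 1) |>.eq_zero_or_pos with h0 | hpos
    · rw [h0, Nat.cast_zero, div_zero]
      positivity
    rw [div_le_div_iff₀ (by exact_mod_cast hpos) (by positivity)]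
    have hpascal := Nat.add_one_mul_choose_eq m k
    exact_mod_cast (by linarith : m.choose k * (m + 1) ≤ (k + 1) * (m + 1).choose (k + 1))
  · have hempty : (G.powersetCard (k + 1)).filter (q ∈ ·) = ∅ :=
      filter_eq_empty_iff.2 fun B hB hqB => hq ((mem_powersetCard.1 hB).1 hqB)
    simp [hempty]
    positivity

lemma uniformProb_exists_mem_powersetCard_le {ι : Type*} (G : Finset α) (k : ℕ)
    (t : Finset ι) (f : ι → α) :
    uniformProb (G.powersetCard k) (fun B => ∃ i ∈ t, f i ∈ B) ≤ #t * k / #G := by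
  calc _ ≤ ∑ i ∈ t, uniformProb (G.powersetCard k) (f i ∈ ·) := uniformProb_exists_le _ _ _
    _ ≤ ∑ _i ∈ t, (k / #G : ℝ) := sum_le_sum fun i _ => uniformProb_mem_powersetCard_le G k (f i)
    _ = #t * k / #G := by rw [sum_const, nsmul_eq_mul, mul_div_assoc]

end RandomSubset

section RowColumn

variable {ι β : Type*} [Fintype ι] [DecidableEq ι] [DecidableEq β]

lemma uniformProb_exists_row_col_le {A : ι → Finset (Finset (β × β))} (hA : ∀ i, (A i).Nonempty)
    {i₁ i₂ : ι} (h : i₁ ≠ i₂) (V : Finset β) {k₁ k₂ : ℕ}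
    (hA₁ : A i₁ = (V ×ˢ V).powersetCard k₁) (hA₂ : A i₂ = (V ×ˢ V).powersetCard k₂) :
    uniformProb (Fintype.piFinset A)
        (fun M => ∃ j ∈ V, (∃ y ∈ V, (j, y) ∈ M i₁) ∧ ∃ x ∈ V, (x, j) ∈ M i₂) ≤
      k₁ * k₂ / #V := by
  have hrow : ∀ j, uniformProb (A i₁) (fun B => ∃ y ∈ V, (j, y) ∈ B) ≤ #V * k₁ / #(V ×ˢ V) :=
    fun j => by rw [hA₁]; exact uniformProb_exists_mem_powersetCard_le _ _ _ _
  have hcol : ∀ j, uniformProb (A i₂) (fun B => ∃ x ∈ V, (x, j) ∈ B) ≤ #V * k₂ / #(V ×ˢ V) :=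
    fun j => by rw [hA₂]; exact uniformProb_exists_mem_powersetCard_le _ _ _ _
  calc _ ≤ ∑ j ∈ V, uniformProb (Fintype.piFinset A)
          (fun M => (∃ y ∈ V, (j, y) ∈ M i₁) ∧ ∃ x ∈ V, (x, j) ∈ M i₂) :=
        uniformProb_exists_le (Fintype.piFinset A) V
          (fun j M => (∃ y ∈ V, (j, y) ∈ M i₁) ∧ ∃ x ∈ V, (x, j) ∈ M i₂)
    _ = ∑ j ∈ V, uniformProb (A i₁) (fun B => ∃ y ∈ V, (j, y) ∈ B) *
          uniformProb (A i₂) (fun B => ∃ x ∈ V, (x, j) ∈ B) :=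
        sum_congr rfl fun j _ => uniformProb_piFinset_and hA h
          (fun B => ∃ y ∈ V, (j, y) ∈ B) (fun B => ∃ x ∈ V, (x, j) ∈ B)
    _ ≤ ∑ _j ∈ V, (#V * k₁ / #(V ×ˢ V) : ℝ) * (#V * k₂ / #(V ×ˢ V)) :=
        sum_le_sum fun j _ => mul_le_mul (hrow j) (hcol j) (uniformProb_nonneg _ _) (by positivity)
    _ = k₁ * k₂ / #V := by
        rw [sum_const, card_product, nsmul_eq_mul]
        push_cast
        rcases eq_or_ne (#V : ℝ) 0 with h0 | h0
        · simp [h0]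
        · field_simp

end RowColumn

section Mlp

variable {d C L w : ℕ}

lemma mlpDim_of_pos_of_lt {i : ℕ} (h0 : 0 < i) (hL : i < L) : mlpDim d C L w i = w := by
  simp [mlpDim, h0.ne', hL.ne]

lemma mlpDim_pos (hd : 0 < d) (hC : 0 < C) (hw : 0 < w) (i : ℕ) : 0 < mlpDim d C L w i := by
  unfold mlpDim; split_ifs <;> assumption

lemma exists_middle_node_of_not_mlpNoPath {M : Fin L → Finset (ℕ × ℕ)} (ℓ : ℕ) (hℓ : ℓ + 1 < L)
    (hM : ¬ mlpNoPath d C L w M) :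
    ∃ j ∈ range (mlpDim d C L w (ℓ + 1)),
      (∃ y ∈ range (mlpDim d C L w ℓ), (j, y) ∈ M ⟨ℓ, by omega⟩) ∧
      ∃ x ∈ range (mlpDim d C L w (ℓ + 2)), (x, j) ∈ M ⟨ℓ + 1, hℓ⟩ := by
  obtain ⟨path, hpath⟩ := not_not.1 hM
  exact ⟨path ⟨ℓ + 1, by omega⟩, mem_range.2 (path _).isLt,
    ⟨path ⟨ℓ, by omega⟩, mem_range.2 (path _).isLt, hpath ⟨ℓ, by omega⟩⟩,
    ⟨path ⟨ℓ + 2, by omega⟩, mem_range.2 (path _).isLt, hpath ⟨ℓ + 1, hℓ⟩⟩⟩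

def layerMasks (d C L : ℕ) (n : ℕ → ℕ) (w : ℕ) (ℓ : Fin L) : Finset (Finset (ℕ × ℕ)) :=
  (range (mlpDim d C L w (ℓ + 1)) ×ˢ range (mlpDim d C L w ℓ)).powersetCard (n (ℓ + 1))

variable {n : ℕ → ℕ}

lemma layerMasks_nonempty (hL : 2 ≤ L) (hd : 0 < d) (hC : 0 < C) (hw : 0 < w)
    (hn : ∀ ℓ ≤ L, n ℓ ≤ w) (ℓ : Fin L) : (layerMasks d C L n w ℓ).Nonempty := by
  rw [layerMasks, powersetCard_nonempty, card_product, card_range, card_range]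
  refine (hn _ ℓ.isLt).trans ?_
  rcases Nat.eq_zero_or_pos ℓ with h0 | h0
  · rw [h0, zero_add, mlpDim_of_pos_of_lt (L := L) one_pos (by omega)]
    exact Nat.le_mul_of_pos_right w (mlpDim_pos hd hC hw 0)
  · rw [mlpDim_of_pos_of_lt h0 ℓ.isLt]
    exact Nat.le_mul_of_pos_left w (mlpDim_pos hd hC hw _)

lemma layerMasks_of_pos_of_lt (ℓ : ℕ) (h0 : 0 < ℓ) (hℓ : ℓ + 1 < L) :
    layerMasks d C L n w ⟨ℓ, by omega⟩ = (range w ×ˢ range w).powersetCard (n (ℓ + 1)) := by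
  simp only [layerMasks]
  rw [mlpDim_of_pos_of_lt (by omega) hℓ, mlpDim_of_pos_of_lt h0 (by omega)]

lemma uniformProb_not_mlpNoPath_le (hd : 0 < d) (hC : 0 < C) (hw : 0 < w)
    (hn : ∀ ℓ ≤ L, n ℓ ≤ w) (ℓ : ℕ) (h0 : 0 < ℓ) (hℓ : ℓ + 2 < L) :
    uniformProb (Fintype.piFinset (layerMasks d C L n w)) (fun M => ¬ mlpNoPath d C L w M) ≤
      n (ℓ + 1) * n (ℓ + 2) / w := by
  calc _ ≤ uniformProb (Fintype.piFinset (layerMasks d C L n w)) (fun M => ∃ j ∈ range w,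
          (∃ y ∈ range w, (j, y) ∈ M ⟨ℓ, by omega⟩) ∧
            ∃ x ∈ range w, (x, j) ∈ M ⟨ℓ + 1, by omega⟩) :=
        uniformProb_mono fun M _ hM => by
          simpa only [mlpDim_of_pos_of_lt h0 (by omega : ℓ < L),
            mlpDim_of_pos_of_lt (by omega : 0 < ℓ + 1) (by omega : ℓ + 1 < L),
            mlpDim_of_pos_of_lt (by omega : 0 < ℓ + 2) hℓ]
            using exists_middle_node_of_not_mlpNoPath ℓ (by omega) hM
    _ ≤ _ := by
        simpa using uniformProb_exists_row_col_le (layerMasks_nonempty (by omega) hd hC hw hn)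
          (Fin.ne_of_val_ne (by simp)) (range w)
          (layerMasks_of_pos_of_lt ℓ h0 (by omega)) (layerMasks_of_pos_of_lt (ℓ + 1) (by omega) hℓ)

end Mlp

theorem stmt7_general (L d C : ℕ) (n : ℕ → ℕ) (hL : 4 ≤ L) (hd : 0 < d) (hC : 0 < C) :
    Tendsto (fun w : ℕ =>
      (((Fintype.piFinset (fun ℓ : Fin L =>
            (Finset.range (mlpDim d C L w ((ℓ : ℕ) + 1)) ×ˢ
              Finset.range (mlpDim d C L w (ℓ : ℕ))).powersetCard (n ((ℓ : ℕ) + 1)))).filter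
          (mlpNoPath d C L w)).card : ℝ) /
        ((Fintype.piFinset (fun ℓ : Fin L =>
            (Finset.range (mlpDim d C L w ((ℓ : ℕ) + 1)) ×ˢ
              Finset.range (mlpDim d C L w (ℓ : ℕ))).powersetCard (n ((ℓ : ℕ) + 1)))).card : ℝ))
      atTop (nhds 1) := by
  change Tendsto (fun w => uniformProb (Fintype.piFinset (layerMasks d C L n w))
    (mlpNoPath d C L w)) atTop (nhds 1)
  have hlarge : ∀ᶠ w in atTop, 0 < w ∧ ∀ ℓ ≤ L, n ℓ ≤ w := by
    filter_upwards [eventually_gt_atTop ((range (L + 1)).sup n)] with w hw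
    exact ⟨by omega, fun ℓ hℓ => (le_sup (mem_range.2 (by omega))).trans hw.le⟩
  refine tendsto_uniformProb_one (n 2 * n 3) ?_ ?_ <;>
    filter_upwards [hlarge] with w ⟨hw, hn⟩
  · exact Fintype.piFinset_nonempty.2 (layerMasks_nonempty (by omega) hd hC hw hn)
  · exact_mod_cast uniformProb_not_mlpNoPath_le hd hC hw hn 1 one_pos (by omega)

/-- in an `L`-layer MLP (`L ≥ 4`) whose layer `ℓ` is independently pruned
to a uniformly random set of exactly `n ℓ` nonzero entries, the probability that the
pruned network contains no connected path from input to output tends to `1` as the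
hidden width `w → ∞`. -/
theorem stmt7 (L d C : ℕ) (n : ℕ → ℕ) (hL : 4 ≤ L) (hd : 0 < d) (hC : 0 < C)
    (hn : ∀ ℓ : ℕ, 1 ≤ ℓ → ℓ ≤ L → 0 < n ℓ) :
    Tendsto (fun w : ℕ =>
      (((Fintype.piFinset (fun ℓ : Fin L =>
            (Finset.range (mlpDim d C L w ((ℓ : ℕ) + 1)) ×ˢ
              Finset.range (mlpDim d C L w (ℓ : ℕ))).powersetCard (n ((ℓ : ℕ) + 1)))).filter
          (mlpNoPath d C L w)).card : ℝ) /
        ((Fintype.piFinset (fun ℓ : Fin L =>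
            (Finset.range (mlpDim d C L w ((ℓ : ℕ) + 1)) ×ˢ
              Finset.range (mlpDim d C L w (ℓ : ℕ))).powersetCard (n ((ℓ : ℕ) + 1)))).card : ℝ))
      atTop (nhds 1) :=
  stmt7_general L d C n hL hd hC
end

section
/- Let M¹, M² be independent uniformly random w × w binary matrices with n₁ and n₂ ones respectively, and define the 'no connected path' probability P(w) as the probability that no nonzero row of M¹ aligns with a nonzero column of M². Then P(w) = ∑_{k=1}^{n₁} [C(w,k)·|A¹_k| / C(w², n₁)] · [C(w(w−k), n₂) / C(w², n₂)], where A¹_k is the set of w × w binary matrices with n₁ ones whose nonzero rows are exactly {1,…,k}. -/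
/-!
Classify the first mask `S₁` by its row support `R = S₁.image Prod.fst`. Given `R`, the second
mask is unconnected to `S₁` iff all its ones lie in the `w (w - #R)` positions whose column is
outside `R`. Permuting rows shows that the number of masks with row support `R` depends only on
`#R`, so exactly `C(w, k) · A k` masks have `k` nonzero rows.
-/

open Finset

section

variable {α β γ : Type*} [Fintype α] [Fintype β] [DecidableEq α]

lemma card_filter_image_fst_eq_congr (n : ℕ) {R R' : Finset α} (h : #R = #R') :
    #{S ∈ powersetCard n (univ : Finset (α × β)) | S.image Prod.fst = R} =
      #{S ∈ powersetCard n (univ : Finset (α × β)) | S.image Prod.fst = R'} := by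
  obtain ⟨σ, hσ⟩ := Equiv.Perm.exists_map_finset_eq R R' h
  refine card_equiv (Equiv.finsetCongr (σ.prodCongr (Equiv.refl β))) fun S => ?_
  have himage : (S.map (σ.prodCongr (Equiv.refl β)).toEmbedding).image Prod.fst =
      (S.image Prod.fst).map σ.toEmbedding := by
    ext; simp
  simp only [Equiv.finsetCongr_apply, mem_filter, mem_powersetCard_univ, card_map, himage, ← hσ,
    map_inj]

lemma card_filter_card_image_fst_eq (n : ℕ) (R : Finset α) :
    #{S ∈ powersetCard n (univ : Finset (α × β)) | #(S.image Prod.fst) = #R} =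
      (Fintype.card α).choose #R *
        #{S ∈ powersetCard n (univ : Finset (α × β)) | S.image Prod.fst = R} := by
  rw [card_eq_sum_card_fiberwise (f := fun S => S.image Prod.fst) (t := powersetCard #R univ)
    (s := {S ∈ powersetCard n (univ : Finset (α × β)) | #(S.image Prod.fst) = #R})
    fun S hS => mem_powersetCard_univ.2 (mem_filter.1 hS).2]
  rw [← card_univ, ← card_powersetCard, ← smul_eq_mul, ← sum_const]
  refine sum_congr rfl fun R' hR' => ?_
  rw [filter_filter, ← card_filter_image_fst_eq_congr n (mem_powersetCard_univ.1 hR')]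
  congr 1
  exact filter_congr fun S _ => ⟨And.right, fun h => ⟨by rw [h, mem_powersetCard_univ.1 hR'], h⟩⟩

lemma card_filter_avoiding_image_fst [DecidableEq β] [Fintype γ] [DecidableEq γ] (n : ℕ)
    (S₁ : Finset (α × β)) :
    #{S₂ ∈ powersetCard n (univ : Finset (γ × α)) | ∀ i j m, (i, j) ∈ S₁ → (m, i) ∉ S₂} =
      (Fintype.card γ * (Fintype.card α - #(S₁.image Prod.fst))).choose n := by
  have hfilter :
      {S₂ ∈ powersetCard n (univ : Finset (γ × α)) | ∀ i j m, (i, j) ∈ S₁ → (m, i) ∉ S₂} =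
        powersetCard n (univ ×ˢ (S₁.image Prod.fst)ᶜ) := by
    ext S₂
    simp only [mem_filter, mem_powersetCard, subset_iff, mem_product, mem_univ, mem_compl,
      mem_image, true_and, implies_true, not_exists, not_and]
    constructor
    · rintro ⟨hcard, hS₂⟩
      refine ⟨fun ⟨m, i⟩ hmi ⟨i', j⟩ hij hi => ?_, hcard⟩
      obtain rfl : i' = i := hi
      exact hS₂ i' j m hij hmi
    · rintro ⟨hS₂, hcard⟩
      exact ⟨hcard, fun i j m hij hmi => hS₂ hmi (i, j) hij rfl⟩
  rw [hfilter, card_powersetCard, card_product, card_compl, card_univ]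

lemma card_unconnected_pairs [DecidableEq β] [Fintype γ] [DecidableEq γ] {n₁ : ℕ} (n₂ : ℕ)
    (h₁ : 0 < n₁) :
    #{p ∈ powersetCard n₁ (univ : Finset (α × β)) ×ˢ powersetCard n₂ (univ : Finset (γ × α)) |
        ∀ i j m, (i, j) ∈ p.1 → (m, i) ∉ p.2} =
      ∑ k ∈ Icc 1 n₁, #{S ∈ powersetCard n₁ (univ : Finset (α × β)) | #(S.image Prod.fst) = k} *
        (Fintype.card γ * (Fintype.card α - k)).choose n₂ := by
  rw [card_filter, sum_product]
  simp only [← card_filter, card_filter_avoiding_image_fst]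
  rw [← sum_fiberwise_of_maps_to (g := fun S => #(S.image Prod.fst)) (t := Icc 1 n₁)]
  · refine sum_congr rfl fun k _ => ?_
    rw [sum_congr rfl fun S hS => by rw [(mem_filter.1 hS).2], sum_const, smul_eq_mul]
  · intro S hS
    rw [mem_powersetCard_univ] at hS
    rw [mem_Icc, Nat.one_le_iff_ne_zero, Ne, card_eq_zero, image_eq_empty, ← card_eq_zero, hS]
    exact ⟨h₁.ne', hS ▸ card_image_le⟩

end

theorem stmt16_general (w n₁ n₂ : ℕ) (h₁ : 0 < n₁) (hw : n₁ ≤ w)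
    (A : ℕ → ℕ)
    (hA : ∀ k, A k =
      (((Finset.univ : Finset (Fin w × Fin w)).powersetCard n₁).filter
        (fun S : Finset (Fin w × Fin w) =>
          S.image Prod.fst = Finset.univ.filter (fun i : Fin w => (i : ℕ) < k))).card) :
    ((((Finset.univ : Finset (Fin w × Fin w)).powersetCard n₁ ×ˢ
        (Finset.univ : Finset (Fin w × Fin w)).powersetCard n₂).filter
        (fun p : Finset (Fin w × Fin w) × Finset (Fin w × Fin w) =>
          ∀ i j m : Fin w, (i, j) ∈ p.1 → (m, i) ∉ p.2)).card : ℝ) /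
      ((Nat.choose (w ^ 2) n₁ : ℝ) * (Nat.choose (w ^ 2) n₂ : ℝ)) =
    ∑ k ∈ Finset.Icc 1 n₁,
      (((Nat.choose w k : ℝ) * (A k : ℝ)) / (Nat.choose (w ^ 2) n₁ : ℝ)) *
        ((Nat.choose (w * (w - k)) n₂ : ℝ) / (Nat.choose (w ^ 2) n₂ : ℝ)) := by
  have hfiber : ∀ k ∈ Icc 1 n₁,
      #{S ∈ powersetCard n₁ (univ : Finset (Fin w × Fin w)) | #(S.image Prod.fst) = k} =
        w.choose k * A k := by
    intro k hk
    have hR : #{i : Fin w | (i : ℕ) < k} = k := by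
      rw [Fin.card_filter_val_lt]
      exact min_eq_right ((mem_Icc.1 hk).2.trans hw)
    have := card_filter_card_image_fst_eq (β := Fin w) n₁ {i : Fin w | (i : ℕ) < k}
    rwa [hR, Fintype.card_fin, ← hA] at this
  have hcount := card_unconnected_pairs (α := Fin w) (β := Fin w) (γ := Fin w) n₂ h₁
  rw [Fintype.card_fin, sum_congr rfl fun k hk => by rw [hfiber k hk]] at hcount
  calc _ = ((∑ k ∈ Icc 1 n₁, w.choose k * A k * (w * (w - k)).choose n₂ : ℕ) : ℝ) /
          ((w ^ 2).choose n₁ * (w ^ 2).choose n₂) := by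
        -- the two filters differ only in their `Decidable` instances
        rw [← hcount]; congr!
    _ = _ := by
        push_cast
        rw [sum_div]
        exact sum_congr rfl fun k _ => by ring

/-- for independent uniformly random `w × w` 0/1 masks `M¹, M²` with `n₁`
and `n₂` ones, the probability `P(w)` that no nonzero row of `M¹` aligns with a nonzero
column of `M²` satisfies
`P(w) = ∑_{k=1}^{n₁} [C(w,k)·A_k / C(w², n₁)] · [C(w(w−k), n₂) / C(w², n₂)]`,
where `A_k` counts the masks with `n₁` ones whose nonzero rows are exactly the first
`k` rows. -/
theorem stmt16 (w n₁ n₂ : ℕ) (h₁ : 0 < n₁) (h₂ : 0 < n₂) (hw : n₁ ≤ w)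
    (A : ℕ → ℕ)
    (hA : ∀ k, A k =
      (((Finset.univ : Finset (Fin w × Fin w)).powersetCard n₁).filter
        (fun S : Finset (Fin w × Fin w) =>
          S.image Prod.fst = Finset.univ.filter (fun i : Fin w => (i : ℕ) < k))).card) :
    ((((Finset.univ : Finset (Fin w × Fin w)).powersetCard n₁ ×ˢ
        (Finset.univ : Finset (Fin w × Fin w)).powersetCard n₂).filter
        (fun p : Finset (Fin w × Fin w) × Finset (Fin w × Fin w) =>
          ∀ i j m : Fin w, (i, j) ∈ p.1 → (m, i) ∉ p.2)).card : ℝ) /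
      ((Nat.choose (w ^ 2) n₁ : ℝ) * (Nat.choose (w ^ 2) n₂ : ℝ)) =
    ∑ k ∈ Finset.Icc 1 n₁,
      (((Nat.choose w k : ℝ) * (A k : ℝ)) / (Nat.choose (w ^ 2) n₁ : ℝ)) *
        ((Nat.choose (w * (w - k)) n₂ : ℝ) / (Nat.choose (w ^ 2) n₂ : ℝ)) :=
  stmt16_general w n₁ n₂ h₁ hw A hA
end
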